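/- arXiv:2410.17511 — 5 statements merged into one kernel-verified Lean document; each statement's English description precedes it below -/
import Mathlib

section
/- Suppose the probability measure P satisfies (1/2, b)-multiplicative expansion on X for some b > 1. Then for every choice of ρ > 0, P satisfies (ρ/(b−1), ρ)-constant expansion. -/
open MeasureTheory Set

/-- `P` satisfies `(1/2, b)`-multiplicative expansion w.r.t. the class partition `Q` and the
neighborhood operation `Nbhd` on sets: for every class `i` and every measurable `S` with
`P_i(S) ≤ 1/2` one has `P_i(Nbhd S) ≥ min (b * P_i S) 1`, where `P_i(T) = P(T ∩ Q i)/P(Q i)`. -/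
def MultiplicativeExpansion {X : Type*} [MeasurableSpace X] (P : Measure X)
    {K : ℕ} (Q : Fin K → Set X) (Nbhd : Set X → Set X) (b : ℝ) : Prop :=
  ∀ i : Fin K, ∀ S : Set X, MeasurableSet S →
    (P (S ∩ Q i)).toReal / (P (Q i)).toReal ≤ 1 / 2 →
    (P (Nbhd S ∩ Q i)).toReal / (P (Q i)).toReal ≥
      min (b * ((P (S ∩ Q i)).toReal / (P (Q i)).toReal)) 1

/-- `P` satisfies `(c, ρ)`-constant expansion w.r.t. the class partition `Q` and the
restricted neighborhood operation `Nstar`: for every measurable `S` with `P S ≥ c` and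
`P (S ∩ Q i) ≤ P (Q i) / 2` for all `i`, one has `P (Nstar S \ S) ≥ min ρ (P S)`. -/
def ConstantExpansion {X : Type*} [MeasurableSpace X] (P : Measure X)
    {K : ℕ} (Q : Fin K → Set X) (Nstar : Set X → Set X) (c ρ : ℝ) : Prop :=
  ∀ S : Set X, MeasurableSet S → (P S).toReal ≥ c →
    (∀ i : Fin K, (P (S ∩ Q i)).toReal ≤ (P (Q i)).toReal / 2) →
    (P (Nstar S \ S)).toReal ≥ min ρ (P S).toReal

/-! Apply multiplicative expansion in each class to `S ∩ Q i`, which carries at most half the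
mass of `Q i`: its neighbourhood inside `Q i` has mass at least `min (b P(S ∩ Q i)) P(Q i)`, and
because `P(Q i) ≥ 2 P(S ∩ Q i)`, at least `min (b - 1) 1 · P(S ∩ Q i)` of that mass lies outside
`S`. Summing over the classes gives `P(N* S \ S) ≥ min (b - 1) 1 · P S`, and this is at least
`min ρ (P S)` as soon as `P S ≥ ρ / (b - 1)`. -/

theorem min_sub_one_one_mul_le_of_min_le_add {a q n b : ℝ} (ha : 0 ≤ a) (hq : a ≤ q / 2)
    (h : min (b * a) q ≤ n + a) : min (b - 1) 1 * a ≤ n := by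
  rcases le_total (b * a) q with hbq | hqb
  · rw [min_eq_left hbq] at h
    nlinarith [min_le_left (b - 1) 1]
  · rw [min_eq_right hqb] at h
    nlinarith [min_le_right (b - 1) 1]

theorem min_le_min_sub_one_one_mul {b ρ s : ℝ} (hb : 1 < b) (hs : ρ / (b - 1) ≤ s) :
    min ρ s ≤ min (b - 1) 1 * s := by
  rcases le_total (b - 1) 1 with hb1 | hb1
  · rw [min_eq_left hb1]
    rw [div_le_iff₀ (by linarith)] at hs
    exact (min_le_left _ _).trans (by linarith)
  · rw [min_eq_right hb1, one_mul]
    exact min_le_right _ _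

theorem measureReal_eq_sum_inter_preimage_singleton {α ι : Type*} [MeasurableSpace α]
    [Fintype ι] {μ : Measure α} [IsFiniteMeasure μ] {f : α → ι}
    (hf : ∀ i, MeasurableSet (f ⁻¹' {i})) {T : Set α} (hT : MeasurableSet T) :
    μ.real T = ∑ i, μ.real (T ∩ f ⁻¹' {i}) := by
  rw [← measureReal_iUnion_fintype, ← inter_iUnion, ← preimage_iUnion, iUnion_of_singleton,
    preimage_univ, inter_univ]
  · exact fun i j hij => (pairwise_disjoint_fiber f hij).mono inter_subset_right inter_subset_right
  · exact fun i => hT.inter (hf i)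

theorem MultiplicativeExpansion.min_le_measureReal_nbhd_inter {X : Type*} [MeasurableSpace X]
    {P : Measure X} {K : ℕ} {Q : Fin K → Set X} {Nbhd : Set X → Set X} {b : ℝ}
    (hexp : MultiplicativeExpansion P Q Nbhd b) {i : Fin K} {S : Set X} (hS : MeasurableSet S)
    (hSQ : S ⊆ Q i) (hhalf : P.real S ≤ P.real (Q i) / 2) :
    min (b * P.real S) (P.real (Q i)) ≤ P.real (Nbhd S ∩ Q i) := by
  -- On a null class the normalized hypothesis is junk (division by zero), but the claim is trivial.
  rcases measureReal_nonneg.eq_or_lt with hQ0 | hQpos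
  · exact (min_le_right _ _).trans (hQ0 ▸ measureReal_nonneg)
  have h := hexp i S hS (by
    rw [inter_eq_left.2 hSQ, ← measureReal_def, ← measureReal_def, div_le_iff₀ hQpos]
    linarith)
  simp only [inter_eq_left.2 hSQ, ← measureReal_def, ge_iff_le, le_div_iff₀ hQpos] at h
  calc min (b * P.real S) (P.real (Q i))
      = min (b * (P.real S / P.real (Q i))) 1 * P.real (Q i) := by
        rw [min_mul_of_nonneg _ _ hQpos.le, one_mul, mul_assoc, div_mul_cancel₀ _ hQpos.ne']
    _ ≤ P.real (Nbhd S ∩ Q i) := h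

theorem MultiplicativeExpansion.min_sub_one_one_mul_le_measureReal_diff_inter {X : Type*}
    [MeasurableSpace X] {P : Measure X} [IsFiniteMeasure P] {K : ℕ} {Q : Fin K → Set X}
    {Nbhd Nstar : Set X → Set X} {b : ℝ} (hexp : MultiplicativeExpansion P Q Nbhd b)
    (hNstar : ∀ S : Set X, Nstar S = ⋃ i : Fin K, (Nbhd (S ∩ Q i) ∩ Q i))
    {i : Fin K} (hQi : MeasurableSet (Q i)) {S : Set X} (hS : MeasurableSet S)
    (hhalf : P.real (S ∩ Q i) ≤ P.real (Q i) / 2) :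
    min (b - 1) 1 * P.real (S ∩ Q i) ≤ P.real ((Nstar S \ S) ∩ Q i) := by
  have hcover : Nbhd (S ∩ Q i) ∩ Q i ⊆ (Nstar S \ S) ∩ Q i ∪ S ∩ Q i := by
    intro x hx
    by_cases hxS : x ∈ S
    · exact Or.inr ⟨hxS, hx.2⟩
    · exact Or.inl ⟨⟨hNstar S ▸ mem_iUnion.2 ⟨i, hx⟩, hxS⟩, hx.2⟩
  refine min_sub_one_one_mul_le_of_min_le_add measureReal_nonneg hhalf ?_
  calc min (b * P.real (S ∩ Q i)) (P.real (Q i))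
      ≤ P.real (Nbhd (S ∩ Q i) ∩ Q i) :=
        hexp.min_le_measureReal_nbhd_inter (hS.inter hQi) inter_subset_right hhalf
    _ ≤ P.real ((Nstar S \ S) ∩ Q i ∪ S ∩ Q i) := measureReal_mono hcover
    _ ≤ P.real ((Nstar S \ S) ∩ Q i) + P.real (S ∩ Q i) := measureReal_union_le _ _

theorem multiplicative_to_constant_expansion_general
    {X : Type*} [MeasurableSpace X] (P : Measure X) [IsProbabilityMeasure P]
    (K : ℕ)
    (Gstar : X → Fin K) (hGstar : Measurable Gstar)
    (Q : Fin K → Set X) (hQ : ∀ i, Q i = {x | Gstar x = i})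
    (Nbhd : Set X → Set X)
    (Nstar : Set X → Set X)
    (hNstar : ∀ S : Set X, Nstar S = ⋃ i : Fin K, (Nbhd (S ∩ Q i) ∩ Q i))
    (hNstarMeas : ∀ S : Set X, MeasurableSet S → MeasurableSet (Nstar S))
    (b : ℝ) (hb : 1 < b)
    (hexp : MultiplicativeExpansion P Q Nbhd b)
    (ρ : ℝ) :
    ConstantExpansion P Q Nstar (ρ / (b - 1)) ρ := by
  obtain rfl : Q = fun i => Gstar ⁻¹' {i} := funext hQ
  intro S hS hSc hhalf
  have hQmeas (i : Fin K) : MeasurableSet (Gstar ⁻¹' {i}) := hGstar (measurableSet_singleton i)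
  have hgain : min (b - 1) 1 * P.real S ≤ P.real (Nstar S \ S) := by
    rw [measureReal_eq_sum_inter_preimage_singleton hQmeas hS,
      measureReal_eq_sum_inter_preimage_singleton hQmeas ((hNstarMeas S hS).diff hS),
      Finset.mul_sum]
    gcongr with i
    exact hexp.min_sub_one_one_mul_le_measureReal_diff_inter hNstar (hQmeas i) hS (hhalf i)
  exact (min_le_min_sub_one_one_mul hb hSc).trans hgain

/-- If the probability measure `P` satisfies `(1/2, b)`-multiplicative expansion on `X` for
some `b > 1`, then for every `ρ > 0`, `P` satisfies `(ρ/(b-1), ρ)`-constant expansion. -/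
theorem multiplicative_to_constant_expansion
    {X : Type*} [MeasurableSpace X] (P : Measure X) [IsProbabilityMeasure P]
    (K : ℕ) (hK : 1 ≤ K)
    (Gstar : X → Fin K) (hGstar : Measurable Gstar)
    (Q : Fin K → Set X) (hQ : ∀ i, Q i = {x | Gstar x = i})
    (hQpos : ∀ i, 0 < P (Q i))
    (N : X → Set X) (hNmeas : ∀ x, MeasurableSet (N x))
    (Nbhd : Set X → Set X) (hNbhd : ∀ S : Set X, Nbhd S = ⋃ x ∈ S, N x)
    (Nstar : Set X → Set X)
    (hNstar : ∀ S : Set X, Nstar S = ⋃ i : Fin K, (Nbhd (S ∩ Q i) ∩ Q i))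
    (hNbhdMeas : ∀ S : Set X, MeasurableSet S → MeasurableSet (Nbhd S))
    (hNstarMeas : ∀ S : Set X, MeasurableSet S → MeasurableSet (Nstar S))
    (b : ℝ) (hb : 1 < b)
    (hexp : MultiplicativeExpansion P Q Nbhd b)
    (ρ : ℝ) (hρ : 0 < ρ) :
    ConstantExpansion P Q Nstar (ρ / (b - 1)) ρ :=
  multiplicative_to_constant_expansion_general P K Gstar hGstar Q hQ Nbhd Nstar hNstar hNstarMeas b
    hb hexp ρ
end

section
/- Suppose the probability measure P satisfies (1/2, b)-multiplicative expansion on X with b ≥ 2. Then every measurable S ⊆ X with P(S ∩ Q_i) ≤ P(Q_i)/2 for all i satisfies P(N*(S) \ S) ≥ P(S). -/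
/-!
Class by class, `S ∩ Q i` has at most half the mass of `Q i`, so multiplicative expansion with
`b ≥ 2` at least doubles it: `P (N(S ∩ Q i) ∩ Q i) ≥ 2 P (S ∩ Q i)`. At most `P (S ∩ Q i)` of this
lies in `S`, so the part outside `S` has mass at least `P (S ∩ Q i)`. The pieces
`N(S ∩ Q i) ∩ Q i \ S` are exactly the traces of `N*(S) \ S` on the classes, and summing over the
classes gives the claim.
-/

open MeasureTheory Set

namespace MeasureTheory

variable {X ι : Type*} [MeasurableSpace X] {P : Measure X}

theorem measureReal_eq_sum_inter_preimage_singleton [IsFiniteMeasure P] [Fintype ι]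
    [MeasurableSpace ι] [MeasurableSingletonClass ι] {f : X → ι} (hf : Measurable f)
    (T : Set X) : P.real T = ∑ i, P.real (T ∩ f ⁻¹' {i}) := by
  have hsum := sum_measure_preimage_singleton (μ := P.restrict T) Finset.univ
    (fun i _ => hf (measurableSet_singleton i))
  simp only [Finset.coe_univ, preimage_univ, Measure.restrict_apply_univ,
    Measure.restrict_apply (hf (measurableSet_singleton _))] at hsum
  simp only [measureReal_def, ← hsum, ENNReal.toReal_sum (fun i _ => measure_ne_top P _),
    inter_comm T]

theorem le_measureReal_sdiff_of_two_mul_le [IsFiniteMeasure P] {A S T : Set X}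
    (hS : MeasurableSet S) (hAS : A ∩ S ⊆ T) (hA : 2 * P.real T ≤ P.real A) :
    P.real T ≤ P.real (A \ S) := by
  have hsplit := measureReal_inter_add_sdiff (μ := P) (s := A) hS
  have hin : P.real (A ∩ S) ≤ P.real T := measureReal_mono hAS
  linarith

end MeasureTheory

theorem MultiplicativeExpansion.two_mul_le {X : Type*} [MeasurableSpace X] {P : Measure X}
    [IsFiniteMeasure P] {K : ℕ} {Q : Fin K → Set X} {Nbhd : Set X → Set X} {b : ℝ}
    (hexp : MultiplicativeExpansion P Q Nbhd b) (hb : 2 ≤ b) {i : Fin K} (hQi : 0 < P (Q i))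
    {T : Set X} (hT : MeasurableSet T) (hTQ : T ⊆ Q i) (hhalf : P.real T ≤ P.real (Q i) / 2) :
    2 * P.real T ≤ P.real (Nbhd T ∩ Q i) := by
  have hq : 0 < P.real (Q i) := ENNReal.toReal_pos hQi.ne' (measure_ne_top P _)
  have hp : 0 ≤ P.real T / P.real (Q i) := div_nonneg measureReal_nonneg hq.le
  have hp_half : P.real T / P.real (Q i) ≤ 1 / 2 := by
    rw [div_le_iff₀ hq]; linarith
  have hexpT := hexp i T hT (by rwa [inter_eq_left.2 hTQ])
  rw [inter_eq_left.2 hTQ] at hexpT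
  simp only [← measureReal_def] at hexpT
  have hdouble : 2 * (P.real T / P.real (Q i)) ≤ P.real (Nbhd T ∩ Q i) / P.real (Q i) :=
    le_trans (le_min (mul_le_mul_of_nonneg_right hb hp) (by linarith)) hexpT
  rwa [← mul_div_assoc, div_le_div_iff_of_pos_right hq] at hdouble

theorem iUnion_inter_preimage_singleton_inter {X ι : Type*} (f : X → ι) (B : ι → Set X)
    (i : ι) : (⋃ j, B j ∩ f ⁻¹' {j}) ∩ f ⁻¹' {i} = B i ∩ f ⁻¹' {i} := by
  ext x
  simp only [mem_inter_iff, mem_iUnion, mem_preimage, mem_singleton_iff]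
  constructor
  · rintro ⟨⟨j, hxB, rfl⟩, rfl⟩
    exact ⟨hxB, rfl⟩
  · rintro ⟨hxB, rfl⟩
    exact ⟨⟨f x, hxB, rfl⟩, rfl⟩

theorem constant_expansion_of_multiplicative_b_ge_two_general
    {X : Type*} [MeasurableSpace X] (P : Measure X) [IsProbabilityMeasure P]
    (K : ℕ)
    (Gstar : X → Fin K) (hGstar : Measurable Gstar)
    (Q : Fin K → Set X) (hQ : ∀ i, Q i = {x | Gstar x = i})
    (hQpos : ∀ i, 0 < P (Q i))
    (Nbhd : Set X → Set X)
    (Nstar : Set X → Set X)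
    (hNstar : ∀ S : Set X, Nstar S = ⋃ i : Fin K, (Nbhd (S ∩ Q i) ∩ Q i))
    (b : ℝ) (hb : 2 ≤ b)
    (hexp : MultiplicativeExpansion P Q Nbhd b)
    (S : Set X) (hS : MeasurableSet S)
    (hhalf : ∀ i : Fin K, (P (S ∩ Q i)).toReal ≤ (P (Q i)).toReal / 2) :
    (P (Nstar S \ S)).toReal ≥ (P S).toReal := by
  obtain rfl : Q = fun i => Gstar ⁻¹' {i} := funext hQ
  have hclass : ∀ i, P.real (S ∩ Gstar ⁻¹' {i}) ≤ P.real ((Nstar S \ S) ∩ Gstar ⁻¹' {i}) := by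
    intro i
    rw [sdiff_inter_right_comm, hNstar, iUnion_inter_preimage_singleton_inter]
    refine le_measureReal_sdiff_of_two_mul_le hS (fun x hx => ⟨hx.2, hx.1.2⟩) ?_
    exact hexp.two_mul_le hb (hQpos i) (hS.inter (hGstar (measurableSet_singleton i)))
      inter_subset_right (hhalf i)
  rw [ge_iff_le, ← measureReal_def, ← measureReal_def,
    measureReal_eq_sum_inter_preimage_singleton hGstar S,
    measureReal_eq_sum_inter_preimage_singleton hGstar (Nstar S \ S)]
  exact Finset.sum_le_sum fun i _ => hclass i

/-- If `P` satisfies `(1/2, b)`-multiplicative expansion with `b ≥ 2`, then every measurable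
`S` with `P (S ∩ Q i) ≤ P (Q i) / 2` for all `i` satisfies `P (N*(S) \ S) ≥ P S`. -/
theorem constant_expansion_of_multiplicative_b_ge_two
    {X : Type*} [MeasurableSpace X] (P : Measure X) [IsProbabilityMeasure P]
    (K : ℕ) (hK : 1 ≤ K)
    (Gstar : X → Fin K) (hGstar : Measurable Gstar)
    (Q : Fin K → Set X) (hQ : ∀ i, Q i = {x | Gstar x = i})
    (hQpos : ∀ i, 0 < P (Q i))
    (N : X → Set X) (hNmeas : ∀ x, MeasurableSet (N x))
    (Nbhd : Set X → Set X) (hNbhd : ∀ S : Set X, Nbhd S = ⋃ x ∈ S, N x)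
    (Nstar : Set X → Set X)
    (hNstar : ∀ S : Set X, Nstar S = ⋃ i : Fin K, (Nbhd (S ∩ Q i) ∩ Q i))
    (hNbhdMeas : ∀ S : Set X, MeasurableSet S → MeasurableSet (Nbhd S))
    (hNstarMeas : ∀ S : Set X, MeasurableSet S → MeasurableSet (Nstar S))
    (b : ℝ) (hb : 2 ≤ b)
    (hexp : MultiplicativeExpansion P Q Nbhd b)
    (S : Set X) (hS : MeasurableSet S)
    (hhalf : ∀ i : Fin K, (P (S ∩ Q i)).toReal ≤ (P (Q i)).toReal / 2) :
    (P (Nstar S \ S)).toReal ≥ (P S).toReal :=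
  constant_expansion_of_multiplicative_b_ge_two_general P K Gstar hGstar Q hQ hQpos Nbhd Nstar
    hNstar b hb hexp S hS hhalf
end

section
/- Suppose P satisfies (1/2, b)-multiplicative expansion for some b > 1, and suppose the constant-expansion implication of the context holds. Then every measurable classifier G with min_{i∈{1,…,K}} P({x : G(x) = i}) > max{2/(b−1), 2}·R_A(G) satisfies Err(G) ≤ max{b/(b−1), 2}·R_A(G). -/
open MeasureTheory Set

/-- The consistency regularization loss `R_A(G) = P {x | ∃ x' ∈ A x, G x' ≠ G x}`. -/
noncomputable def consistencyLoss {X : Type*} [MeasurableSpace X] (P : Measure X)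
    (A : X → Set X) {K : ℕ} (G : X → Fin K) : ℝ :=
  (P {x | ∃ x' ∈ A x, G x' ≠ G x}).toReal

/-- The unsupervised error `Err(G) = min_π P {x | π (G x) ≠ G* x}`, the minimum taken over
permutations `π` of the `K` classes. -/
noncomputable def unsupErr {X : Type*} [MeasurableSpace X] (P : Measure X)
    {K : ℕ} (Gstar G : X → Fin K) : ℝ :=
  ⨅ π : Equiv.Perm (Fin K), (P {x | π (G x) ≠ Gstar x}).toReal

/-- Assuming `(1/2, b)`-multiplicative expansion (`b > 1`) and the constant-expansion
implication of Wei et al., every measurable classifier `G` with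
`min_i P {x | G x = i} > max {2/(b-1), 2} * R_A(G)` satisfies
`Err(G) ≤ max {b/(b-1), 2} * R_A(G)`. -/
theorem accuracy_of_multiplicative_expansion
    {X : Type*} [MeasurableSpace X] (P : Measure X) [IsProbabilityMeasure P]
    (K : ℕ) (hK : 1 ≤ K)
    (Gstar : X → Fin K) (hGstar : Measurable Gstar)
    (Q : Fin K → Set X) (hQ : ∀ i, Q i = {x | Gstar x = i})
    (hQpos : ∀ i, 0 < P (Q i))
    (A : X → Set X) (hAmeas : ∀ x, MeasurableSet (A x))
    (N : X → Set X) (hN : ∀ x, N x = {x' | (A x ∩ A x').Nonempty})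
    (Nbhd : Set X → Set X) (hNbhd : ∀ S : Set X, Nbhd S = ⋃ x ∈ S, N x)
    (Nstar : Set X → Set X)
    (hNstar : ∀ S : Set X, Nstar S = ⋃ i : Fin K, (Nbhd (S ∩ Q i) ∩ Q i))
    (hNbhdMeas : ∀ S : Set X, MeasurableSet S → MeasurableSet (Nbhd S))
    (hNstarMeas : ∀ S : Set X, MeasurableSet S → MeasurableSet (Nstar S))
    (b : ℝ) (hb : 1 < b)
    (hexp : MultiplicativeExpansion P Q Nbhd b)
    -- the constant-expansion implication of Wei et al.
    (hWei : ∀ c ρ : ℝ, 0 < c → 0 < ρ → ∀ G : X → Fin K, Measurable G →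
      ConstantExpansion P Q Nstar c ρ →
      consistencyLoss P A G < ρ →
      (∀ i : Fin K, (P {x | G x = i}).toReal > 2 * max c (consistencyLoss P A G)) →
      ∃ π : Equiv.Perm (Fin K),
        (P {x | π (G x) ≠ Gstar x}).toReal ≤
          max c (consistencyLoss P A G) + consistencyLoss P A G)
    (G : X → Fin K) (hG : Measurable G)
    (hmin : ∀ i : Fin K,
      (P {x | G x = i}).toReal > max (2 / (b - 1)) 2 * consistencyLoss P A G) :
    unsupErr P Gstar G ≤ max (b / (b - 1)) 2 * consistencyLoss P A G := by
  classical
  have hb1 : (0:ℝ) < b - 1 := by linarith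
  obtain ⟨m, hm_def⟩ : ∃ m : ℝ, m = min (b - 1) 1 := ⟨_, rfl⟩
  have hm : 0 < m := hm_def ▸ lt_min hb1 one_pos
  have hm1 : m ≤ 1 := hm_def ▸ min_le_right _ _
  obtain ⟨R, hRdef⟩ : ∃ R : ℝ, R = consistencyLoss P A G := ⟨_, rfl⟩
  rw [← hRdef] at hmin ⊢

  have hR0 : 0 ≤ R := hRdef ▸ ENNReal.toReal_nonneg
  -- measurability of Q i
  have hQmeas : ∀ i, MeasurableSet (Q i) := fun i => by
    rw [hQ]; exact hGstar (measurableSet_singleton i)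
  have hqi : ∀ i, 0 < (P (Q i)).toReal := fun i =>
    ENNReal.toReal_pos (hQpos i).ne' (measure_ne_top P _)
  -- disjointness of the Q i
  have hQdisj : Pairwise (Function.onFun Disjoint Q) := by
    intro i j hij
    simp only [Function.onFun, hQ, Set.disjoint_left]
    rintro x hx1 hx2
    exact hij (hx1.symm.trans hx2)
  have hQunion : (⋃ i, Q i) = Set.univ := by
    ext x; simp [hQ]
  -- summation over the partition
  have hsum : ∀ T : Set X, MeasurableSet T →
      ∑ i : Fin K, (P (T ∩ Q i)).toReal = (P T).toReal := by
    intro T hT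
    have hTeq : T = ⋃ i, T ∩ Q i := by
      rw [← Set.inter_iUnion, hQunion, Set.inter_univ]
    have h1 : P T = ∑ i : Fin K, P (T ∩ Q i) := by
      conv_lhs => rw [hTeq]
      rw [measure_iUnion ?_ (fun i => hT.inter (hQmeas i)), tsum_fintype]
      intro i j hij
      exact (hQdisj hij).mono Set.inter_subset_right Set.inter_subset_right
    rw [h1, ENNReal.toReal_sum (fun i _ => measure_ne_top P _)]
  -- constant expansion from multiplicative expansion
  have hCE : ∀ c : ℝ, 0 < c → ConstantExpansion P Q Nstar c (m * c) := by
    intro c hc S hS hSc hShalf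
    have key : ∀ i : Fin K,
        min (b * (P (S ∩ Q i)).toReal) (P (Q i)).toReal
          ≤ (P (Nbhd (S ∩ Q i) ∩ Q i)).toReal := by
      intro i
      set pi := (P (S ∩ Q i)).toReal
      set qi := (P (Q i)).toReal
      have hq : 0 < qi := hqi i
      have hratio : (P ((S ∩ Q i) ∩ Q i)).toReal / qi ≤ 1 / 2 := by
        rw [Set.inter_assoc, Set.inter_self, div_le_iff₀ hq]
        have := hShalf i
        linarith
      have h1 := hexp i (S ∩ Q i) (hS.inter (hQmeas i)) hratio
      rw [Set.inter_assoc, Set.inter_self] at h1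
      -- h1 : toReal / qi ≥ min (b * (pi/qi)) 1
      have heq : min (b * pi) qi / qi = min (b * (pi / qi)) 1 := by
        rw [← min_div_div_right hq.le, div_self hq.ne', mul_div_assoc]
      have h2 : min (b * pi) qi / qi ≤ (P (Nbhd (S ∩ Q i) ∩ Q i)).toReal / qi := by
        rw [heq]; exact h1
      exact (div_le_div_iff_of_pos_right hq).1 h2
    have hsub : ∀ i : Fin K,
        (P (Nbhd (S ∩ Q i) ∩ Q i)).toReal ≤ (P (Nstar S ∩ Q i)).toReal := by
      intro i
      apply ENNReal.toReal_le_toReal (measure_ne_top P _) (measure_ne_top P _) |>.2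
      apply measure_mono
      intro x hx
      exact ⟨(hNstar S).symm ▸ Set.mem_iUnion.2 ⟨i, hx⟩, hx.2⟩
    have hdiff : ∀ i : Fin K,
        (P (Nstar S ∩ Q i)).toReal
          ≤ (P ((Nstar S \ S) ∩ Q i)).toReal + (P (S ∩ Q i)).toReal := by
      intro i
      have hsub2 : Nstar S ∩ Q i ⊆ ((Nstar S \ S) ∩ Q i) ∪ (S ∩ Q i) := by
        intro x hx
        by_cases hxS : x ∈ S
        · exact Or.inr ⟨hxS, hx.2⟩
        · exact Or.inl ⟨⟨hx.1, hxS⟩, hx.2⟩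
      calc (P (Nstar S ∩ Q i)).toReal
          ≤ (P (((Nstar S \ S) ∩ Q i) ∪ (S ∩ Q i))).toReal := by
            exact (ENNReal.toReal_le_toReal (measure_ne_top P _) (measure_ne_top P _)).2
              (measure_mono hsub2)
        _ ≤ (P ((Nstar S \ S) ∩ Q i)).toReal + (P (S ∩ Q i)).toReal := by
            rw [← ENNReal.toReal_add (measure_ne_top P _) (measure_ne_top P _)]
            exact (ENNReal.toReal_le_toReal (measure_ne_top P _) (by
              exact ENNReal.add_ne_top.2 ⟨measure_ne_top P _, measure_ne_top P _⟩)).2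
              (measure_union_le _ _)
    have hterm : ∀ i : Fin K,
        m * (P (S ∩ Q i)).toReal ≤ (P ((Nstar S \ S) ∩ Q i)).toReal := by
      intro i
      have h1 := key i
      have h2 := hsub i
      have h3 := hdiff i
      have hhalf := hShalf i
      have hpnn : (0:ℝ) ≤ (P (S ∩ Q i)).toReal := ENNReal.toReal_nonneg
      have hmin2 : m * (P (S ∩ Q i)).toReal + (P (S ∩ Q i)).toReal
          ≤ min (b * (P (S ∩ Q i)).toReal) (P (Q i)).toReal := by
        have hm2 : m ≤ b - 1 := hm_def ▸ min_le_left _ _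
        rcases le_total (b * (P (S ∩ Q i)).toReal) ((P (Q i)).toReal) with h | h
        · rw [min_eq_left h]; nlinarith
        · rw [min_eq_right h]; nlinarith
      linarith
    have hfin : m * (P S).toReal ≤ (P (Nstar S \ S)).toReal := by
      have hSmeas := hS
      have e1 := hsum S hS
      have e2 := hsum (Nstar S \ S) ((hNstarMeas S hS).diff hS)
      calc m * (P S).toReal = m * ∑ i : Fin K, (P (S ∩ Q i)).toReal := by rw [e1]
        _ = ∑ i : Fin K, m * (P (S ∩ Q i)).toReal := by rw [Finset.mul_sum]
        _ ≤ ∑ i : Fin K, (P ((Nstar S \ S) ∩ Q i)).toReal :=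
            Finset.sum_le_sum fun i _ => hterm i
        _ = (P (Nstar S \ S)).toReal := e2
    calc min (m * c) (P S).toReal ≤ m * c := min_le_left _ _
      _ ≤ m * (P S).toReal := by nlinarith
      _ ≤ (P (Nstar S \ S)).toReal := hfin
  -- rewriting the max constants
  have h2m : max (2 / (b - 1)) 2 = 2 / m := by
    rcases le_total (b - 1) 1 with h | h
    · rw [hm_def, min_eq_left h, max_eq_left]
      rw [le_div_iff₀ hb1]; linarith
    · rw [hm_def, min_eq_right h, max_eq_right]
      · norm_num
      · rw [div_le_iff₀ hb1]; linarith
  have hmax : max (b / (b - 1)) 2 = 1 / m + 1 := by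
    rcases le_total (b - 1) 1 with h | h
    · rw [hm_def, min_eq_left h, max_eq_left]
      · field_simp; ring
      · rw [le_div_iff₀ hb1]; linarith
    · rw [hm_def, min_eq_right h, max_eq_right]
      · norm_num
      · rw [div_le_iff₀ hb1]; linarith
  -- nonemptiness
  haveI : NeZero K := ⟨by omega⟩
  have hne : (Finset.univ : Finset (Fin K)).Nonempty := Finset.univ_nonempty
  obtain ⟨M, hMdef⟩ : ∃ M : ℝ,
      M = Finset.univ.inf' hne (fun i => (P {x | G x = i}).toReal) := ⟨_, rfl⟩
  have hM : 2 / m * R < M := by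
    rw [hMdef, Finset.lt_inf'_iff]
    intro i _
    have := hmin i
    rw [h2m] at this
    exact this
  have hMle : ∀ i : Fin K, M ≤ (P {x | G x = i}).toReal := fun i =>
    hMdef ▸ Finset.inf'_le _ (Finset.mem_univ i)
  have hM' : R / m < M / 2 := by
    have h' : 2 / m * R * m < M * m := mul_lt_mul_of_pos_right hM hm
    have h'' : 2 / m * R * m = 2 * R := by field_simp
    rw [div_lt_div_iff₀ hm (by norm_num : (0:ℝ) < 2)]
    nlinarith
  -- epsilon argument
  have hbdd : BddBelow (Set.range fun π : Equiv.Perm (Fin K) =>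
      (P {x | π (G x) ≠ Gstar x}).toReal) := by
    refine ⟨0, ?_⟩
    rintro x ⟨π, rfl⟩
    exact ENNReal.toReal_nonneg
  have hstep : ∀ ε : ℝ, 0 < ε → unsupErr P Gstar G ≤ (1 / m + 1) * R + ε := by
    intro ε hε
    obtain ⟨δ, hδpos, hδε, hδ2⟩ :
        ∃ δ : ℝ, 0 < δ ∧ δ ≤ ε ∧ δ ≤ (M / 2 - R / m) / 2 :=
      ⟨min ε ((M / 2 - R / m) / 2), lt_min hε (by linarith), min_le_left _ _,
        min_le_right _ _⟩
    obtain ⟨c, hcdef⟩ : ∃ c : ℝ, c = R / m + δ := ⟨_, rfl⟩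
    have hRm0 : 0 ≤ R / m := div_nonneg hR0 hm.le
    have hc : 0 < c := by rw [hcdef]; positivity
    have hρ : 0 < m * c := mul_pos hm hc
    have hmc : m * c = R + m * δ := by rw [hcdef]; field_simp
    have hRltρ : R < m * c := by nlinarith
    have hRlec : R ≤ c := by
      have h3 : R ≤ R / m := by
        rw [le_div_iff₀ hm]; nlinarith
      linarith
    have hside : ∀ i : Fin K,
        (P {x | G x = i}).toReal > 2 * max c (consistencyLoss P A G) := by
      intro i
      rw [← hRdef, max_eq_left hRlec]
      have := hMle i
      nlinarith
    obtain ⟨π, hπ⟩ := hWei c (m * c) hc hρ G hG (hCE c hc)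
      (by rw [← hRdef]; exact hRltρ) hside
    have h1 : unsupErr P Gstar G ≤ (P {x | π (G x) ≠ Gstar x}).toReal :=
      ciInf_le hbdd π
    have h2 : max c R = c := max_eq_left hRlec
    rw [← hRdef, h2] at hπ
    have h4 : c + R ≤ (1 / m + 1) * R + ε := by
      have h5 : R / m = 1 / m * R := by ring
      linarith
    linarith
  have := le_of_forall_pos_le_add hstep
  rw [hmax]
  linarith
end

section
/- (Theorem 1) Suppose P satisfies (1/2, b)-multiplicative expansion for some b > 1; the ground-truth classifier G* is A-separated with probability 1 − μ, i.e. R_A(G*) ≤ μ; min_{y∈{1,…,K}} P({x : G*(x) = y}) > max{2/(b−1), 2}·μ; and the constant-expansion implication of the context holds. Let Ĝ be any minimizer of R_A(G) over measurable classifiers G : X → {1,…,K} satisfying the constraint min_{y} P({x : G(x) = y}) > max{2/(b−1), 2}·R_A(G). Then Err(Ĝ) ≤ max{2/(b−1), 2}·μ. -/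
open MeasureTheory Set

/-!
Class by class, a set carrying at most half of a class expands by at least `min (b - 1) 1` times
its own mass (by a factor `b`, or up to the whole class), so `(1/2, b)`-multiplicative expansion
gives `(c, (b - 1) c)`-constant expansion for every `c`. Comparing `Ĝ` with the admissible `G*`
gives `R_A(Ĝ) ≤ μ`. Wei et al.'s implication, applied with `c` just above `R_A(Ĝ) / (b - 1)`,
bounds the error by `max c R_A(Ĝ) + R_A(Ĝ)`, which tends to at most
`max (2 / (b - 1)) 2 * R_A(Ĝ)`.
-/
lemma toReal_measure_eq_sum_inter_fiber {X : Type*} [MeasurableSpace X] {P : Measure X}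
    [IsFiniteMeasure P] {ι : Type*} [Fintype ι] [MeasurableSpace ι] [MeasurableSingletonClass ι]
    {f : X → ι} (hf : Measurable f) (T : Set X) :
    (P T).toReal = ∑ i, (P (T ∩ {x | f x = i})).toReal := by
  have hfib : ∀ i, MeasurableSet (f ⁻¹' {i}) := fun i => hf (measurableSet_singleton i)
  have := sum_measureReal_preimage_singleton (μ := P.restrict T) Finset.univ (fun i _ => hfib i)
  simp only [measureReal_def, Measure.restrict_apply (hfib _), Finset.coe_univ, preimage_univ,
    Measure.restrict_apply MeasurableSet.univ, univ_inter] at this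
  rw [← this]
  simp only [inter_comm]
  rfl

lemma min_sub_one_one_mul_le {b p q d : ℝ} (hp : 0 ≤ p) (hpq : 2 * p ≤ q)
    (h : min (b * p) q ≤ d + p) : min (b - 1) 1 * p ≤ d := by
  rcases le_total (b * p) q with hbp | hbp
  · rw [min_eq_left hbp] at h
    nlinarith [mul_le_mul_of_nonneg_right (min_le_left (b - 1) 1) hp]
  · rw [min_eq_right hbp] at h
    nlinarith [mul_le_mul_of_nonneg_right (min_le_right (b - 1) 1) hp]

lemma min_mul_le_min_sub_one_one_mul {b c s : ℝ} (hb : 1 ≤ b) (hcs : c ≤ s) :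
    min ((b - 1) * c) s ≤ min (b - 1) 1 * s := by
  rcases le_total (b - 1) 1 with hb1 | hb1
  · rw [min_eq_left hb1]
    exact (min_le_left _ _).trans (mul_le_mul_of_nonneg_left hcs (by linarith))
  · rw [min_eq_right hb1, one_mul]
    exact min_le_right _ _

namespace MultiplicativeExpansion

variable {X : Type*} [MeasurableSpace X] {P : Measure X} [IsFiniteMeasure P] {K : ℕ}
  {Q : Fin K → Set X} {Nbhd : Set X → Set X} {b : ℝ}

lemma min_mul_le_toReal_measure (hexp : MultiplicativeExpansion P Q Nbhd b)
    (hQpos : ∀ i, 0 < P (Q i)) (i : Fin K) {S : Set X} (hS : MeasurableSet S)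
    (hhalf : (P (S ∩ Q i)).toReal ≤ (P (Q i)).toReal / 2) :
    min (b * (P (S ∩ Q i)).toReal) (P (Q i)).toReal ≤ (P (Nbhd S ∩ Q i)).toReal := by
  have hq : 0 < (P (Q i)).toReal := ENNReal.toReal_pos (hQpos i).ne' (measure_ne_top P _)
  have h := hexp i S hS (by rw [div_le_iff₀ hq]; linarith)
  rw [ge_iff_le, le_div_iff₀ hq, min_mul_of_nonneg _ _ hq.le, one_mul, mul_assoc,
    div_mul_cancel₀ _ hq.ne'] at h
  exact h

theorem constantExpansion (hexp : MultiplicativeExpansion P Q Nbhd b)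
    {Gstar : X → Fin K} (hGstar : Measurable Gstar) (hQ : ∀ i, Q i = {x | Gstar x = i})
    (hQpos : ∀ i, 0 < P (Q i)) {Nstar : Set X → Set X}
    (hNstar : ∀ S i, Nbhd (S ∩ Q i) ∩ Q i ⊆ Nstar S) (hb : 1 ≤ b) (c : ℝ) :
    ConstantExpansion P Q Nstar c ((b - 1) * c) := by
  intro S hS hSc hhalf
  have hQm : ∀ i, MeasurableSet (Q i) := fun i => hQ i ▸ hGstar (measurableSet_singleton i)
  have hclass : ∀ i,
      min (b - 1) 1 * (P (S ∩ Q i)).toReal ≤ (P ((Nstar S \ S) ∩ Q i)).toReal := by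
    intro i
    refine min_sub_one_one_mul_le (q := (P (Q i)).toReal) ENNReal.toReal_nonneg
      (by linarith [hhalf i]) ?_
    have hexp_i := hexp.min_mul_le_toReal_measure hQpos i (hS.inter (hQm i))
      (by rw [inter_assoc, inter_self]; exact hhalf i)
    rw [inter_assoc, inter_self] at hexp_i
    refine hexp_i.trans ?_
    rw [← ENNReal.toReal_add (measure_ne_top P _) (measure_ne_top P _)]
    refine ENNReal.toReal_mono (by finiteness) ((measure_mono ?_).trans (measure_union_le _ _))
    intro x hx
    by_cases hxS : x ∈ S
    · exact Or.inr ⟨hxS, hx.2⟩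
    · exact Or.inl ⟨⟨hNstar S i ⟨hx.1, hx.2⟩, hxS⟩, hx.2⟩
  calc min ((b - 1) * c) (P S).toReal ≤ min (b - 1) 1 * (P S).toReal :=
        min_mul_le_min_sub_one_one_mul hb hSc
    _ = ∑ i, min (b - 1) 1 * (P (S ∩ Q i)).toReal := by
        rw [toReal_measure_eq_sum_inter_fiber hGstar S, Finset.mul_sum]
        simp only [hQ]
    _ ≤ ∑ i, (P ((Nstar S \ S) ∩ Q i)).toReal := Finset.sum_le_sum fun i _ => hclass i
    _ = (P (Nstar S \ S)).toReal := by
        rw [toReal_measure_eq_sum_inter_fiber hGstar (Nstar S \ S)]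
        simp only [hQ]

end MultiplicativeExpansion

section unsupErr

variable {X : Type*} [MeasurableSpace X] {P : Measure X} {K : ℕ} {Gstar G : X → Fin K}

lemma unsupErr_le (π : Equiv.Perm (Fin K)) :
    unsupErr P Gstar G ≤ (P {x | π (G x) ≠ Gstar x}).toReal :=
  ciInf_le ⟨0, by rintro _ ⟨_, rfl⟩; exact ENNReal.toReal_nonneg⟩ π

open Filter Topology in
/-- The class-size condition is open in `c`, so the bound for `c > c₀` passes to the limit. -/
lemma unsupErr_le_max_add_of_forall_gt {c₀ r : ℝ}
    (h : ∀ c > c₀, (∀ i, 2 * max c r < (P {x | G x = i}).toReal) →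
      ∃ π : Equiv.Perm (Fin K), (P {x | π (G x) ≠ Gstar x}).toReal ≤ max c r + r)
    (hG : ∀ i, 2 * max c₀ r < (P {x | G x = i}).toReal) :
    unsupErr P Gstar G ≤ max c₀ r + r := by
  have hcont : Continuous fun c : ℝ => max c r := continuous_id.max continuous_const
  have hclasses : ∀ᶠ c in 𝓝[>] c₀, ∀ i, 2 * max c r < (P {x | G x = i}).toReal :=
    eventually_all.2 fun i => nhdsWithin_le_nhds <|
      (continuous_const.mul hcont).tendsto c₀ |>.eventually (gt_mem_nhds (hG i))
  have hlim : Tendsto (fun c => max c r + r) (𝓝[>] c₀) (𝓝 (max c₀ r + r)) :=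
    (hcont.add continuous_const).tendsto c₀ |>.mono_left nhdsWithin_le_nhds
  refine ge_of_tendsto hlim ?_
  filter_upwards [self_mem_nhdsWithin, hclasses] with c hc hci
  obtain ⟨π, hπ⟩ := h c hc hci
  exact (unsupErr_le π).trans hπ

end unsupErr

lemma max_two_div_sub_one_two_mul {b r : ℝ} (hr : 0 ≤ r) :
    max (2 / (b - 1)) 2 * r = 2 * max (r / (b - 1)) r := by
  rw [max_mul_of_nonneg _ _ hr, mul_max_of_nonneg _ _ zero_le_two]
  ring_nf

theorem unsup_error_bound_of_expansion_general
    {X : Type*} [MeasurableSpace X] (P : Measure X) [IsProbabilityMeasure P]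
    (K : ℕ)
    (Gstar : X → Fin K) (hGstar : Measurable Gstar)
    (Q : Fin K → Set X) (hQ : ∀ i, Q i = {x | Gstar x = i})
    (hQpos : ∀ i, 0 < P (Q i))
    (A : X → Set X)
    (Nbhd : Set X → Set X)
    (Nstar : Set X → Set X)
    (hNstar : ∀ S : Set X, Nstar S = ⋃ i : Fin K, (Nbhd (S ∩ Q i) ∩ Q i))
    (b : ℝ) (hb : 1 < b)
    (hexp : MultiplicativeExpansion P Q Nbhd b)
    (μ : ℝ)
    -- A-separation of the ground-truth classifier with probability 1 - μ
    (hsep : consistencyLoss P A Gstar ≤ μ)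
    -- the ground-truth classes are not too small
    (hmin : ∀ y : Fin K, (P {x | Gstar x = y}).toReal > max (2 / (b - 1)) 2 * μ)
    -- the constant-expansion implication of Wei et al.
    (hWei : ∀ c ρ : ℝ, 0 < c → 0 < ρ → ∀ G : X → Fin K, Measurable G →
      ConstantExpansion P Q Nstar c ρ →
      consistencyLoss P A G < ρ →
      (∀ i : Fin K, (P {x | G x = i}).toReal > 2 * max c (consistencyLoss P A G)) →
      ∃ π : Equiv.Perm (Fin K),
        (P {x | π (G x) ≠ Gstar x}).toReal ≤
          max c (consistencyLoss P A G) + consistencyLoss P A G)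
    -- Ĝ is a minimizer of R_A over measurable classifiers satisfying the constraint
    (Ghat : X → Fin K) (hGhat : Measurable Ghat)
    (hGhatCon : ∀ y : Fin K,
      (P {x | Ghat x = y}).toReal > max (2 / (b - 1)) 2 * consistencyLoss P A Ghat)
    (hGhatMin : ∀ G : X → Fin K, Measurable G →
      (∀ y : Fin K,
        (P {x | G x = y}).toReal > max (2 / (b - 1)) 2 * consistencyLoss P A G) →
      consistencyLoss P A Ghat ≤ consistencyLoss P A G) :
    unsupErr P Gstar Ghat ≤ max (2 / (b - 1)) 2 * μ := by
  set r := consistencyLoss P A Ghat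
  have hr : 0 ≤ r := ENNReal.toReal_nonneg
  have hb1 : 0 < b - 1 := sub_pos.2 hb
  have hrμ : r ≤ μ := by
    refine (hGhatMin Gstar hGstar fun y => ?_).trans hsep
    exact (hmin y).trans_le' (mul_le_mul_of_nonneg_left hsep (by positivity))
  have hCE := hexp.constantExpansion hGstar hQ hQpos
    (fun S i => hNstar S ▸ subset_iUnion (fun j => Nbhd (S ∩ Q j) ∩ Q j) i) hb.le
  calc unsupErr P Gstar Ghat ≤ max (r / (b - 1)) r + r := by
        refine unsupErr_le_max_add_of_forall_gt (fun c hc hcls => ?_)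
          (fun i => max_two_div_sub_one_two_mul hr ▸ hGhatCon i)
        have hc0 : 0 < c := hc.trans_le' (by positivity)
        exact hWei c _ hc0 (mul_pos hb1 hc0) Ghat hGhat (hCE c)
          ((div_lt_iff₀' hb1).1 hc) hcls
    _ ≤ 2 * max (r / (b - 1)) r := by linarith [le_max_right (r / (b - 1)) r]
    _ = max (2 / (b - 1)) 2 * r := (max_two_div_sub_one_two_mul hr).symm
    _ ≤ max (2 / (b - 1)) 2 * μ := mul_le_mul_of_nonneg_left hrμ (by positivity)

/-- Theorem 1: under `(1/2, b)`-multiplicative expansion (`b > 1`), `A`-separation of the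
ground truth with probability `1 - μ` (i.e. `R_A(G*) ≤ μ`), the class-probability condition
`min_y P {x | G* x = y} > max {2/(b-1), 2} * μ`, and the constant-expansion implication of
Wei et al., any minimizer `Ĝ` of `R_A` over measurable classifiers satisfying
`min_y P {x | G x = y} > max {2/(b-1), 2} * R_A(G)` has
`Err(Ĝ) ≤ max {2/(b-1), 2} * μ`. -/
theorem unsup_error_bound_of_expansion
    {X : Type*} [MeasurableSpace X] (P : Measure X) [IsProbabilityMeasure P]
    (K : ℕ) (hK : 1 ≤ K)
    (Gstar : X → Fin K) (hGstar : Measurable Gstar)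
    (Q : Fin K → Set X) (hQ : ∀ i, Q i = {x | Gstar x = i})
    (hQpos : ∀ i, 0 < P (Q i))
    (A : X → Set X) (hAmeas : ∀ x, MeasurableSet (A x))
    (N : X → Set X) (hN : ∀ x, N x = {x' | (A x ∩ A x').Nonempty})
    (Nbhd : Set X → Set X) (hNbhd : ∀ S : Set X, Nbhd S = ⋃ x ∈ S, N x)
    (Nstar : Set X → Set X)
    (hNstar : ∀ S : Set X, Nstar S = ⋃ i : Fin K, (Nbhd (S ∩ Q i) ∩ Q i))
    (hNbhdMeas : ∀ S : Set X, MeasurableSet S → MeasurableSet (Nbhd S))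
    (hNstarMeas : ∀ S : Set X, MeasurableSet S → MeasurableSet (Nstar S))
    (b : ℝ) (hb : 1 < b)
    (hexp : MultiplicativeExpansion P Q Nbhd b)
    (μ : ℝ)
    -- A-separation of the ground-truth classifier with probability 1 - μ
    (hsep : consistencyLoss P A Gstar ≤ μ)
    -- the ground-truth classes are not too small
    (hmin : ∀ y : Fin K, (P {x | Gstar x = y}).toReal > max (2 / (b - 1)) 2 * μ)
    -- the constant-expansion implication of Wei et al.
    (hWei : ∀ c ρ : ℝ, 0 < c → 0 < ρ → ∀ G : X → Fin K, Measurable G →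
      ConstantExpansion P Q Nstar c ρ →
      consistencyLoss P A G < ρ →
      (∀ i : Fin K, (P {x | G x = i}).toReal > 2 * max c (consistencyLoss P A G)) →
      ∃ π : Equiv.Perm (Fin K),
        (P {x | π (G x) ≠ Gstar x}).toReal ≤
          max c (consistencyLoss P A G) + consistencyLoss P A G)
    -- Ĝ is a minimizer of R_A over measurable classifiers satisfying the constraint
    (Ghat : X → Fin K) (hGhat : Measurable Ghat)
    (hGhatCon : ∀ y : Fin K,
      (P {x | Ghat x = y}).toReal > max (2 / (b - 1)) 2 * consistencyLoss P A Ghat)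
    (hGhatMin : ∀ G : X → Fin K, Measurable G →
      (∀ y : Fin K,
        (P {x | G x = y}).toReal > max (2 / (b - 1)) 2 * consistencyLoss P A G) →
      consistencyLoss P A Ghat ≤ consistencyLoss P A G) :
    unsupErr P Gstar Ghat ≤ max (2 / (b - 1)) 2 * μ :=
  unsup_error_bound_of_expansion_general P K Gstar hGstar Q hQ hQpos A Nbhd Nstar hNstar b hb hexp μ
    hsep hmin hWei Ghat hGhat hGhatCon hGhatMin
end

section
/- Let q be a probability density with respect to μ, let X_1,…,X_m be i.i.d. random variables with density q, let 𝒩 be a finite nonempty set of nonnegative measurable functions, and let δ ∈ (0,1]. Then with probability at least 1 − δ, simultaneously for every p̄ ∈ 𝒩: ∏_{i=1}^m √( p̄(X_i)/q(X_i) ) ≤ (|𝒩|/δ) · ( ∫ √(p̄·q) dμ )^m, where the ratio p̄(x)/q(x) is taken to be 0 when q(x) = 0. -/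
open MeasureTheory ENNReal

lemma lintegral_pi_prod_aux {Ω : Type*} [MeasurableSpace Ω] (ν : Measure Ω) [SigmaFinite ν]
    (g : Ω → ℝ≥0∞) (hg : Measurable g) (m : ℕ) :
    ∫⁻ ω : Fin m → Ω, ∏ i, g (ω i) ∂(Measure.pi fun _ => ν) = (∫⁻ x, g x ∂ν) ^ m := by
  induction m with
  | zero =>
      simp only [Finset.univ_eq_empty, Finset.prod_empty, pow_zero, lintegral_one]
      rw [Measure.pi_univ]; simp
  | succ n ih =>
      have h := measurePreserving_piFinSuccAbove (fun _ : Fin (n + 1) => ν) 0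
      set e := MeasurableEquiv.piFinSuccAbove (fun _ : Fin (n + 1) => Ω) 0 with he
      have hG : Measurable fun p : Ω × (Fin n → Ω) => g p.1 * ∏ i, g (p.2 i) :=
        (hg.comp measurable_fst).mul
          (Finset.measurable_prod _ fun i _ => hg.comp ((measurable_pi_apply i).comp measurable_snd))
      have key : ∀ ω : Fin (n + 1) → Ω,
          (∏ i, g (ω i)) = g (e ω).1 * ∏ i, g ((e ω).2 i) := by
        intro ω
        rw [Fin.prod_univ_succ]
        congr 1
      calc ∫⁻ ω : Fin (n + 1) → Ω, ∏ i, g (ω i) ∂(Measure.pi fun _ => ν)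
          = ∫⁻ ω, g (e ω).1 * ∏ i, g ((e ω).2 i) ∂(Measure.pi fun _ => ν) := by
            simp_rw [key]
        _ = ∫⁻ p : Ω × (Fin n → Ω), g p.1 * ∏ i, g (p.2 i) ∂(ν.prod (Measure.pi fun _ => ν)) :=
            h.lintegral_comp hG
        _ = (∫⁻ x, g x ∂ν) * ∫⁻ ω : Fin n → Ω, ∏ i, g (ω i) ∂(Measure.pi fun _ => ν) :=
            lintegral_prod_mul hg.aemeasurable
              (Finset.measurable_prod _ fun i _ => hg.comp (measurable_pi_apply i)).aemeasurable
        _ = (∫⁻ x, g x ∂ν) ^ (n + 1) := by rw [ih, pow_succ]; ring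

/-- If `q` is a probability density w.r.t. `μ`, `X_1, …, X_m` are i.i.d. with density `q`
(modelled by the product measure of `m` copies of `μ.withDensity q`), `𝒩` is a finite
nonempty set of nonnegative measurable functions, and `δ ∈ (0, 1]`, then with probability at
least `1 - δ`, simultaneously for every `p̄ ∈ 𝒩`:
`∏ i, √(p̄ (X i) / q (X i)) ≤ (|𝒩| / δ) * (∫ √(p̄ * q) dμ) ^ m`,
where the ratio `p̄ x / q x` is taken to be `0` when `q x = 0`. -/
theorem prod_sqrt_ratio_le_card_div_delta_mul_affinity_pow
    {Ω : Type*} [MeasurableSpace Ω] (μ : Measure Ω) [SigmaFinite μ]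
    (q : Ω → ℝ) (hq_meas : Measurable q) (hq_nonneg : ∀ x, 0 ≤ q x)
    (hq_density : ∫⁻ x, ENNReal.ofReal (q x) ∂μ = 1)
    (m : ℕ)
    (𝒩 : Finset (Ω → ℝ)) (h𝒩ne : 𝒩.Nonempty)
    (h𝒩 : ∀ pbar ∈ 𝒩, Measurable pbar ∧ ∀ x, 0 ≤ pbar x)
    (δ : ℝ) (hδ0 : 0 < δ) (hδ1 : δ ≤ 1) :
    (Measure.pi fun _ : Fin m => μ.withDensity fun x => ENNReal.ofReal (q x))
      {ω : Fin m → Ω | ∀ pbar ∈ 𝒩,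
        (∏ i : Fin m,
          ENNReal.ofReal (Real.sqrt (if q (ω i) = 0 then 0 else pbar (ω i) / q (ω i))))
        ≤ ((𝒩.card : ℝ≥0∞) / ENNReal.ofReal δ) *
            (∫⁻ x, ENNReal.ofReal (Real.sqrt (pbar x * q x)) ∂μ) ^ m}
    ≥ ENNReal.ofReal (1 - δ) := by
  classical
  set ν := μ.withDensity fun x => ENNReal.ofReal (q x) with hν
  have hνprob : IsProbabilityMeasure ν := by
    constructor
    rw [hν, withDensity_apply _ MeasurableSet.univ, setLIntegral_univ, hq_density]
  set P := Measure.pi fun _ : Fin m => ν with hP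
  have hPprob : IsProbabilityMeasure P := by infer_instance
  -- notation
  set N : ℝ≥0∞ := (𝒩.card : ℝ≥0∞) with hNdef
  have hN0 : N ≠ 0 := by
    simp [hNdef, Finset.card_ne_zero_of_mem h𝒩ne.choose_spec]
  have hNtop : N ≠ ∞ := by simp [hNdef]
  have hd0 : ENNReal.ofReal δ ≠ 0 := by simp [ENNReal.ofReal_eq_zero, not_le, hδ0]
  have hdtop : ENNReal.ofReal δ ≠ ∞ := ENNReal.ofReal_ne_top
  -- per-function data
  set g : (Ω → ℝ) → Ω → ℝ≥0∞ := fun pbar x =>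
    ENNReal.ofReal (Real.sqrt (if q x = 0 then 0 else pbar x / q x)) with hgdef
  set A : (Ω → ℝ) → ℝ≥0∞ := fun pbar => ∫⁻ x, ENNReal.ofReal (Real.sqrt (pbar x * q x)) ∂μ
    with hAdef
  set F : (Ω → ℝ) → (Fin m → Ω) → ℝ≥0∞ := fun pbar ω => ∏ i, g pbar (ω i) with hFdef
  have hgmeas : ∀ pbar ∈ 𝒩, Measurable (g pbar) := by
    intro pbar hp
    have h1 : Measurable fun x => if q x = 0 then 0 else pbar x / q x :=
      Measurable.ite (hq_meas (measurableSet_singleton 0)) measurable_const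
        ((h𝒩 pbar hp).1.div hq_meas)
    exact (ENNReal.measurable_ofReal.comp (Real.continuous_sqrt.measurable.comp h1))
  have hFmeas : ∀ pbar ∈ 𝒩, Measurable (F pbar) :=
    fun pbar hp => Finset.measurable_prod _ fun i _ =>
      (hgmeas pbar hp).comp (measurable_pi_apply i)
  -- the key moment bound
  have hmoment : ∀ pbar ∈ 𝒩, ∫⁻ ω, F pbar ω ∂P ≤ A pbar ^ m := by
    intro pbar hp
    rw [hFdef, hP]
    rw [lintegral_pi_prod_aux ν (g pbar) (hgmeas pbar hp) m]
    refine pow_le_pow_left' ?_ m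
    rw [hν, lintegral_withDensity_eq_lintegral_mul _ (hq_meas.ennreal_ofReal)
      (hgmeas pbar hp)]
    refine lintegral_mono fun x => ?_
    simp only [Pi.mul_apply, hgdef]
    by_cases hqx : q x = 0
    · simp [hqx]
    · have hqpos : 0 < q x := lt_of_le_of_ne (hq_nonneg x) (Ne.symm hqx)
      rw [if_neg hqx, ← ENNReal.ofReal_mul (hq_nonneg x)]
      refine ENNReal.ofReal_le_ofReal (le_of_eq ?_)
      have : pbar x * q x = (pbar x / q x) * (q x) ^ 2 := by field_simp
      rw [this, Real.sqrt_mul (div_nonneg ((h𝒩 pbar hp).2 x) (hq_nonneg x)),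
        Real.sqrt_sq (hq_nonneg x)]
      ring
  -- per-function bad set bound
  have hbad : ∀ pbar ∈ 𝒩,
      P {ω | N / ENNReal.ofReal δ * A pbar ^ m < F pbar ω} ≤ ENNReal.ofReal δ / N := by
    intro pbar hp
    set c := N / ENNReal.ofReal δ * A pbar ^ m with hc
    rcases eq_or_ne (A pbar ^ m) 0 with hA0 | hA0
    · have hint : ∫⁻ ω, F pbar ω ∂P = 0 := le_antisymm (hA0 ▸ hmoment pbar hp) zero_le
      have hFae : F pbar =ᵐ[P] 0 := (lintegral_eq_zero_iff (hFmeas pbar hp)).1 hint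
      have hsub : {ω | c < F pbar ω} ⊆ {ω | F pbar ω ≠ 0} := by
        intro ω hω
        simp only [Set.mem_setOf_eq] at hω ⊢
        exact fun h => by simp [h] at hω
      have : P {ω | F pbar ω ≠ 0} = 0 := by
        have := hFae
        rw [Filter.EventuallyEq, ae_iff] at this
        simpa using this
      exact le_trans (le_of_le_of_eq (measure_mono hsub) this) zero_le
    rcases eq_or_ne (A pbar ^ m) ∞ with hAtop | hAtop
    · have hcT : c = ∞ := by
        rw [hc, hAtop, ENNReal.mul_top]
        exact ENNReal.div_ne_zero.2 ⟨hN0, hdtop⟩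
      have : {ω | c < F pbar ω} = ∅ := by
        ext ω; simp [hcT]
      simp [this]
    · -- main Markov case
      have hcd0 : N / ENNReal.ofReal δ ≠ 0 := ENNReal.div_ne_zero.2 ⟨hN0, hdtop⟩
      have hcdtop : N / ENNReal.ofReal δ ≠ ∞ := by
        simp [ENNReal.div_eq_top, hNtop, hd0]
      have hc0 : c ≠ 0 := mul_ne_zero hcd0 hA0
      have hctop : c ≠ ∞ := ENNReal.mul_ne_top hcdtop hAtop
      have hmarkov : c * P {ω | c ≤ F pbar ω} ≤ ∫⁻ ω, F pbar ω ∂P :=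
        mul_meas_ge_le_lintegral₀ (hFmeas pbar hp).aemeasurable c
      have hone : N / ENNReal.ofReal δ * (ENNReal.ofReal δ / N) = 1 := by
        rw [div_eq_mul_inv, div_eq_mul_inv]
        calc N * (ENNReal.ofReal δ)⁻¹ * (ENNReal.ofReal δ * N⁻¹)
            = (N * N⁻¹) * (ENNReal.ofReal δ * (ENNReal.ofReal δ)⁻¹) := by ring
          _ = 1 := by rw [ENNReal.mul_inv_cancel hN0 hNtop,
              ENNReal.mul_inv_cancel hd0 hdtop, mul_one]
      have heq : A pbar ^ m = c * (ENNReal.ofReal δ / N) := by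
        rw [hc]
        calc A pbar ^ m = A pbar ^ m * 1 := by rw [mul_one]
          _ = A pbar ^ m * (N / ENNReal.ofReal δ * (ENNReal.ofReal δ / N)) := by rw [hone]
          _ = N / ENNReal.ofReal δ * A pbar ^ m * (ENNReal.ofReal δ / N) := by ring
      have h1 : c * P {ω | c ≤ F pbar ω} ≤ c * (ENNReal.ofReal δ / N) :=
        le_trans hmarkov (le_trans (hmoment pbar hp) heq.le)
      have h2 : P {ω | c ≤ F pbar ω} ≤ ENNReal.ofReal δ / N :=
        (ENNReal.mul_le_mul_iff_right hc0 hctop).1 h1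
      have hsub : {ω : Fin m → Ω | c < F pbar ω} ⊆ {ω : Fin m → Ω | c ≤ F pbar ω} := by
        intro ω hω
        simp only [Set.mem_setOf_eq] at hω ⊢
        exact le_of_lt hω
      exact le_trans (measure_mono hsub) h2
  -- union bound
  set Bad : Set (Fin m → Ω) := ⋃ pbar ∈ 𝒩, {ω | N / ENNReal.ofReal δ * A pbar ^ m < F pbar ω}
    with hBad
  have hBadmeas : MeasurableSet Bad := by
    refine MeasurableSet.biUnion 𝒩.countable_toSet fun pbar hp => ?_
    exact measurableSet_lt measurable_const (hFmeas pbar hp)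
  have hBadle : P Bad ≤ ENNReal.ofReal δ := by
    calc P Bad ≤ ∑ pbar ∈ 𝒩, P {ω | N / ENNReal.ofReal δ * A pbar ^ m < F pbar ω} :=
          measure_biUnion_finset_le 𝒩 _
      _ ≤ ∑ _pbar ∈ 𝒩, ENNReal.ofReal δ / N := Finset.sum_le_sum fun p hp => hbad p hp
      _ = N * (ENNReal.ofReal δ / N) := by rw [Finset.sum_const, nsmul_eq_mul, hNdef]
      _ = ENNReal.ofReal δ := ENNReal.mul_div_cancel hN0 hNtop
  have hset : {ω : Fin m → Ω | ∀ pbar ∈ 𝒩,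
      (∏ i : Fin m,
          ENNReal.ofReal (Real.sqrt (if q (ω i) = 0 then 0 else pbar (ω i) / q (ω i))))
        ≤ ((𝒩.card : ℝ≥0∞) / ENNReal.ofReal δ) *
            (∫⁻ x, ENNReal.ofReal (Real.sqrt (pbar x * q x)) ∂μ) ^ m} = Badᶜ := by
    ext ω
    simp only [hBad, Set.mem_setOf_eq, Set.mem_compl_iff, Set.mem_iUnion, not_exists,
      not_lt, hFdef, hgdef, hAdef, hNdef]
  rw [hset, measure_compl hBadmeas (measure_ne_top _ _), hPprob.measure_univ]
  calc ENNReal.ofReal (1 - δ) = 1 - ENNReal.ofReal δ := by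
        rw [ENNReal.ofReal_sub 1 hδ0.le, ENNReal.ofReal_one]
    _ ≤ 1 - P Bad := tsub_le_tsub_left hBadle 1
end
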